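/- Let c₀, c_N, c_{2N} ∈ ℂ. Then the system of equations in the real unknown λ given by Im(e^{−iλ} c_N) = 0 and e^{−2iλ} c_{2N} = 3 c̄₀ has a solution λ ∈ ℝ if and only if 3|c₀| = |c_{2N}| and c₀ c_{2N} (c̄_N)² is a nonnegative real number. Moreover, if in addition some of c₀, c_N, c_{2N} is nonzero and these conditions hold, then the set of solutions λ modulo 2π consists of exactly two values, which are antipodal (differ by π). -/

import Mathlib

open Complex

/-- The critical-point system for the averaged function γ_N on the circle of
circular orbits: Im(e^{−iλ} c_N) = 0 and e^{−2iλ} c_{2N} = 3 c̄₀. -/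
def SolvesSystem (c0 cN c2N : ℂ) (l : ℝ) : Prop :=
  (Complex.exp (-(Complex.I * l)) * cN).im = 0 ∧
  Complex.exp (-(2 * Complex.I * l)) * c2N = 3 * (starRingEnd ℂ) c0

/-! Write `z = e^{-iλ}`. If `z² c_{2N} = 3 c̄₀` with `|z| = 1`, then
`c₀ c_{2N} c̄_N² = 3 |c₀|² (conj (z c_N))²`, so for `c₀ ≠ 0` the sign condition on
`c₀ c_{2N} c̄_N²` is exactly the first equation `Im (z c_N) = 0`. Hence, for `c₀ ≠ 0`, the
system reduces to `e^{2iλ} = c_{2N} / (3 c̄₀)`, a point of the unit circle when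
`3 |c₀| = |c_{2N}|`, whose solutions are `λ ∈ arg (c_{2N} / (3 c̄₀)) / 2 + πℤ`. For `c₀ = 0`
the norm condition forces `c_{2N} = 0`, and the system reduces to
`Im (e^{-iλ} c_N) = |c_N| sin (arg c_N - λ) = 0`. -/

open ComplexConjugate ComplexOrder

namespace Complex

theorem exp_mul_I_eq_exp_mul_I_iff {x y : ℝ} :
    exp (x * I) = exp (y * I) ↔ ∃ m : ℤ, x = y + m * (2 * Real.pi) := by
  rw [← Circle.coe_exp, ← Circle.coe_exp, Circle.coe_inj, Circle.exp_eq_exp]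

theorem exp_neg_two_mul_I_mul_eq_iff {a b : ℂ} (hb : b ≠ 0) (hab : ‖a‖ = ‖b‖) (l : ℝ) :
    exp (-(2 * I * l)) * a = b ↔ ∃ k : ℤ, l = arg (a / b) / 2 + k * Real.pi := by
  set θ := arg (a / b)
  have hunit : exp (θ * I) = a / b := by
    have hnorm : ‖a / b‖ = 1 := by rw [norm_div, hab, div_self (norm_ne_zero_iff.2 hb)]
    simpa only [hnorm, ofReal_one, one_mul] using norm_mul_exp_arg_mul_I (a / b)
  have hexp : exp (2 * I * l) = exp ((2 * l : ℝ) * I) := by push_cast; ring_nf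
  rw [exp_neg, inv_mul_eq_iff_eq_mul₀ (exp_ne_zero _), ← div_eq_iff hb, eq_comm, hexp,
    ← hunit, exp_mul_I_eq_exp_mul_I_iff]
  constructor
  · rintro ⟨m, hm⟩
    exact ⟨m, by linarith⟩
  · rintro ⟨k, hk⟩
    exact ⟨k, by linarith⟩

theorem im_exp_neg_I_mul_mul (c : ℂ) (l : ℝ) :
    (exp (-(I * l)) * c).im = ‖c‖ * Real.sin (arg c - l) := by
  conv_lhs => rw [← norm_mul_exp_arg_mul_I c]
  have : exp (-(I * l)) * (‖c‖ * exp (arg c * I)) = ‖c‖ * exp ((arg c - l : ℝ) * I) := by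
    rw [mul_left_comm, ← exp_add]
    push_cast
    ring_nf
  rw [this, im_ofReal_mul, exp_ofReal_mul_I_im]

theorem im_exp_neg_I_mul_mul_eq_zero_iff {c : ℂ} (hc : c ≠ 0) (l : ℝ) :
    (exp (-(I * l)) * c).im = 0 ↔ ∃ k : ℤ, l = arg c + k * Real.pi := by
  rw [im_exp_neg_I_mul_mul, mul_eq_zero, norm_eq_zero, or_iff_right hc, Real.sin_eq_zero_iff]
  constructor
  · rintro ⟨n, hn⟩
    exact ⟨-n, by push_cast; linarith⟩
  · rintro ⟨k, hk⟩
    exact ⟨-k, by push_cast; linarith⟩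

end Complex

theorem nonneg_iff_im_mul_eq_zero {z c0 cN c2N : ℂ} (hz : ‖z‖ = 1) (hc0 : c0 ≠ 0)
    (h : z ^ 2 * c2N = 3 * conj c0) :
    0 ≤ c0 * c2N * conj cN ^ 2 ↔ (z * cN).im = 0 := by
  have hzz : conj z * z = 1 := by rw [conj_mul', hz]; norm_num
  have key : c0 * c2N * conj cN ^ 2 = (3 * normSq c0 : ℝ) * conj (z * cN) ^ 2 := by
    rw [map_mul, ofReal_mul, normSq_eq_conj_mul_self]
    push_cast
    linear_combination (c0 * conj cN ^ 2 * conj z ^ 2) * h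
      - c0 * c2N * conj cN ^ 2 * (conj z * z + 1) * hzz
  have hpos : (0 : ℂ) < (3 * normSq c0 : ℝ) := by
    exact_mod_cast mul_pos three_pos (normSq_pos.2 hc0)
  rw [key, ← neg_eq_zero, ← conj_im, ← sq_nonneg_iff]
  simpa using mul_le_mul_iff_right₀ (b := 0) (c := conj (z * cN) ^ 2) hpos

theorem exp_neg_two_mul_I_mul_eq_sq (l : ℝ) :
    exp (-(2 * I * l)) = exp (-(I * l)) ^ 2 := by
  rw [← exp_nat_mul]
  ring_nf

namespace SolvesSystem

variable {c0 cN c2N : ℂ} {l : ℝ}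

theorem norm_eq (h : SolvesSystem c0 cN c2N l) : 3 * ‖c0‖ = ‖c2N‖ := by
  simpa [norm_exp] using (congrArg norm h.2).symm

theorem nonneg (h : SolvesSystem c0 cN c2N l) : 0 ≤ c0 * c2N * conj cN ^ 2 := by
  rcases eq_or_ne c0 0 with rfl | hc0
  · simp
  · obtain ⟨h1, h2⟩ := h
    rw [exp_neg_two_mul_I_mul_eq_sq] at h2
    exact (nonneg_iff_im_mul_eq_zero (by simp [norm_exp]) hc0 h2).2 h1

end SolvesSystem

theorem solvesSystem_iff_of_ne_zero {c0 cN c2N : ℂ} (hc0 : c0 ≠ 0)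
    (habs : 3 * ‖c0‖ = ‖c2N‖) (hP : 0 ≤ c0 * c2N * conj cN ^ 2) (l : ℝ) :
    SolvesSystem c0 cN c2N l ↔ ∃ k : ℤ, l = arg (c2N / (3 * conj c0)) / 2 + k * Real.pi := by
  have h3 : (3 : ℂ) * conj c0 ≠ 0 := by simp [hc0]
  have hnorm : ‖c2N‖ = ‖3 * conj c0‖ := by simp [← habs]
  rw [SolvesSystem, ← exp_neg_two_mul_I_mul_eq_iff h3 hnorm, and_iff_right_of_imp]
  intro h
  rw [exp_neg_two_mul_I_mul_eq_sq] at h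
  exact (nonneg_iff_im_mul_eq_zero (by simp [norm_exp]) hc0 h).1 hP

theorem solvesSystem_zero_left_iff {cN : ℂ} (hcN : cN ≠ 0) (l : ℝ) :
    SolvesSystem 0 cN 0 l ↔ ∃ k : ℤ, l = arg cN + k * Real.pi := by
  simp only [SolvesSystem, im_exp_neg_I_mul_mul_eq_zero_iff hcN, map_zero, mul_zero,
    and_true]

theorem exists_solvesSystem_iff_eq_add_int_mul_pi {c0 cN c2N : ℂ}
    (hne : c0 ≠ 0 ∨ cN ≠ 0 ∨ c2N ≠ 0) (habs : 3 * ‖c0‖ = ‖c2N‖)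
    (hP : 0 ≤ c0 * c2N * conj cN ^ 2) :
    ∃ l0 : ℝ, ∀ l : ℝ, SolvesSystem c0 cN c2N l ↔ ∃ k : ℤ, l = l0 + k * Real.pi := by
  rcases eq_or_ne c0 0 with rfl | hc0
  · obtain rfl : c2N = 0 := by simpa using habs.symm
    have hcN : cN ≠ 0 := by simpa using hne
    exact ⟨_, solvesSystem_zero_left_iff hcN⟩
  · exact ⟨_, solvesSystem_iff_of_ne_zero hc0 habs hP⟩

theorem stmt19 (c0 cN c2N : ℂ) :
    ((∃ l : ℝ, SolvesSystem c0 cN c2N l) ↔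
      3 * ‖c0‖ = ‖c2N‖ ∧
      (c0 * c2N * ((starRingEnd ℂ) cN) ^ 2).im = 0 ∧
      0 ≤ (c0 * c2N * ((starRingEnd ℂ) cN) ^ 2).re) ∧
    ((c0 ≠ 0 ∨ cN ≠ 0 ∨ c2N ≠ 0) →
      3 * ‖c0‖ = ‖c2N‖ →
      (c0 * c2N * ((starRingEnd ℂ) cN) ^ 2).im = 0 →
      0 ≤ (c0 * c2N * ((starRingEnd ℂ) cN) ^ 2).re →
      ∃ l0 : ℝ, ∀ l : ℝ,
        SolvesSystem c0 cN c2N l ↔ ∃ k : ℤ, l = l0 + k * Real.pi) := by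
  have hP : (c0 * c2N * conj cN ^ 2).im = 0 ∧ 0 ≤ (c0 * c2N * conj cN ^ 2).re ↔
      0 ≤ c0 * c2N * conj cN ^ 2 := by
    rw [nonneg_iff, eq_comm, and_comm]
  refine ⟨⟨fun ⟨l, hl⟩ ↦ ⟨hl.norm_eq, hP.2 hl.nonneg⟩, fun ⟨habs, hcond⟩ ↦ ?_⟩,
    fun hne habs him hre ↦ exists_solvesSystem_iff_eq_add_int_mul_pi hne habs (hP.1 ⟨him, hre⟩)⟩
  by_cases hne : c0 ≠ 0 ∨ cN ≠ 0 ∨ c2N ≠ 0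
  · obtain ⟨l0, hl0⟩ := exists_solvesSystem_iff_eq_add_int_mul_pi hne habs (hP.1 hcond)
    exact ⟨l0, (hl0 l0).2 ⟨0, by simp⟩⟩
  · obtain ⟨rfl, rfl, rfl⟩ : c0 = 0 ∧ cN = 0 ∧ c2N = 0 := by simpa using hne
    exact ⟨0, by simp [SolvesSystem]⟩
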